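/- arXiv:1601.04175 — 7 statements merged into one kernel-verified Lean document; each statement's English description precedes it below -/
import Mathlib

section
/- Let n ≥ 1, let P be an n×n real sub-stochastic matrix, let γ ∈ [0,1), let k ∈ {1,…,n}, and let e ∈ ℝⁿ be the standard basis vector with e_k = 1 and all other entries 0. Then e is the unique stochastic vector maximizing π ↦ Σ_{t=0}^∞ γ^t (πᵀ Pᵗ e); that is, for every stochastic vector π ∈ ℝⁿ with π ≠ e, one has Σ_{t=0}^∞ γ^t (πᵀ Pᵗ e) < Σ_{t=0}^∞ γ^t (eᵀ Pᵗ e). -/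
/-!
Put `v := ∑ₜ γᵗ Pᵗ e`. The objective is `π ↦ π ⬝ᵥ v`, which is linear, so on the simplex it
suffices that `v` has a strict maximum at `k`. This comes from the Bellman equation
`v = e + γ P v`: off `k` it reads `vᵢ = γ (P v)ᵢ ≤ γ max v`, while `max v ≥ v_k ≥ 1 > 0`, so the
maximum sits at `k`, and then `vᵢ ≤ γ v_k < v_k` for `i ≠ k`.
-/

open Matrix

namespace Matrix

variable {ι : Type*} [Fintype ι] {P : Matrix ι ι ℝ}

theorem mulVec_apply_le_of_le (hP : ∀ i j, 0 ≤ P i j) (hrow : ∀ i, ∑ j, P i j ≤ 1)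
    {v : ι → ℝ} {c : ℝ} (hc : 0 ≤ c) (hv : ∀ j, v j ≤ c) (i : ι) : (P *ᵥ v) i ≤ c :=
  calc (P *ᵥ v) i = ∑ j, P i j * v j := rfl
    _ ≤ ∑ j, P i j * c := Finset.sum_le_sum fun j _ => mul_le_mul_of_nonneg_left (hv j) (hP i j)
    _ = (∑ j, P i j) * c := (Finset.sum_mul _ _ _).symm
    _ ≤ c := mul_le_of_le_one_left hc (hrow i)

theorem mapsTo_mulVec_Icc (hP : ∀ i j, 0 ≤ P i j) (hrow : ∀ i, ∑ j, P i j ≤ 1) :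
    Set.MapsTo (P *ᵥ ·) (Set.Icc 0 1) (Set.Icc 0 1) := fun _ ⟨h0, h1⟩ =>
  ⟨fun i => Finset.sum_nonneg fun j _ => mul_nonneg (hP i j) (h0 j),
    mulVec_apply_le_of_le hP hrow zero_le_one h1⟩

variable [DecidableEq ι]

theorem pow_mulVec_mem_Icc (hP : ∀ i j, 0 ≤ P i j) (hrow : ∀ i, ∑ j, P i j ≤ 1)
    {x : ι → ℝ} (hx : x ∈ Set.Icc 0 1) (t : ℕ) : P ^ t *ᵥ x ∈ Set.Icc 0 1 := by
  induction t with
  | zero => simpa using hx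
  | succ t ih => simpa [pow_succ', ← mulVec_mulVec] using mapsTo_mulVec_Icc hP hrow ih

noncomputable def discountedSum (γ : ℝ) (P : Matrix ι ι ℝ) (x : ι → ℝ) : ι → ℝ :=
  fun i => ∑' t : ℕ, γ ^ t * (P ^ t *ᵥ x) i

variable {γ : ℝ} {x : ι → ℝ}

theorem summable_pow_mul_pow_mulVec_apply (hP : ∀ i j, 0 ≤ P i j) (hrow : ∀ i, ∑ j, P i j ≤ 1)
    (hγ0 : 0 ≤ γ) (hγ1 : γ < 1) (hx : x ∈ Set.Icc 0 1) (i : ι) :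
    Summable fun t : ℕ => γ ^ t * (P ^ t *ᵥ x) i := by
  refine (summable_geometric_of_lt_one hγ0 hγ1).of_nonneg_of_le (fun t => ?_) fun t => ?_
  · exact mul_nonneg (pow_nonneg hγ0 t) ((pow_mulVec_mem_Icc hP hrow hx t).1 i)
  · exact mul_le_of_le_one_right (pow_nonneg hγ0 t) ((pow_mulVec_mem_Icc hP hrow hx t).2 i)

theorem dotProduct_discountedSum (hs : ∀ i, Summable fun t : ℕ => γ ^ t * (P ^ t *ᵥ x) i)
    (π : ι → ℝ) :
    π ⬝ᵥ discountedSum γ P x = ∑' t : ℕ, γ ^ t * (π ⬝ᵥ (P ^ t *ᵥ x)) :=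
  calc π ⬝ᵥ discountedSum γ P x = ∑ i, ∑' t : ℕ, π i * (γ ^ t * (P ^ t *ᵥ x) i) := by
        simp only [dotProduct, discountedSum, tsum_mul_left]
    _ = ∑' t : ℕ, ∑ i, π i * (γ ^ t * (P ^ t *ᵥ x) i) :=
        (Summable.tsum_finsetSum fun i _ => (hs i).mul_left (π i)).symm
    _ = ∑' t : ℕ, γ ^ t * (π ⬝ᵥ (P ^ t *ᵥ x)) :=
        tsum_congr fun t => by simp only [dotProduct, Finset.mul_sum, mul_left_comm]

theorem discountedSum_eq_add_smul_mulVec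
    (hs : ∀ i, Summable fun t : ℕ => γ ^ t * (P ^ t *ᵥ x) i) :
    discountedSum γ P x = x + γ • P *ᵥ discountedSum γ P x := by
  ext i
  rw [Pi.add_apply, Pi.smul_apply, smul_eq_mul, mulVec, dotProduct_discountedSum hs,
    discountedSum, (hs i).tsum_eq_zero_add, ← tsum_mul_left]
  congr 1
  · simp
  · exact tsum_congr fun t => by
      rw [pow_succ', pow_succ', ← mulVec_mulVec, dotProduct, mulVec, dotProduct]; ring

theorem apply_le_discountedSum (hs : ∀ i, Summable fun t : ℕ => γ ^ t * (P ^ t *ᵥ x) i)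
    (hγ0 : 0 ≤ γ) (hx : ∀ t : ℕ, 0 ≤ P ^ t *ᵥ x) (i : ι) :
    x i ≤ discountedSum γ P x i := by
  simpa [discountedSum] using (hs i).le_tsum 0 fun t _ => mul_nonneg (pow_nonneg hγ0 t) (hx t i)

theorem apply_lt_of_eq_add_smul_mulVec (hP : ∀ i j, 0 ≤ P i j) (hrow : ∀ i, ∑ j, P i j ≤ 1)
    (hγ0 : 0 ≤ γ) (hγ1 : γ < 1) {v : ι → ℝ} {k : ι} (hv : v = x + γ • P *ᵥ v)
    (hx : ∀ i ≠ k, x i = 0) (hk : 0 < v k) {i : ι} (hi : i ≠ k) : v i < v k := by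
  obtain ⟨m, -, hm⟩ := Finset.exists_max_image Finset.univ v ⟨k, Finset.mem_univ k⟩
  have hle_max : ∀ j, v j ≤ v m := fun j => hm j (Finset.mem_univ j)
  have hoff : ∀ j ≠ k, v j ≤ γ * v m := fun j hj => by
    rw [congrFun hv j, Pi.add_apply, hx j hj, zero_add, Pi.smul_apply, smul_eq_mul]
    exact mul_le_mul_of_nonneg_left
      (mulVec_apply_le_of_le hP hrow (hk.le.trans (hle_max k)) hle_max j) hγ0
  obtain rfl : m = k := by
    by_contra hmk
    nlinarith [hoff m hmk, hle_max k]
  exact (hoff i hi).trans_lt (mul_lt_of_lt_one_left hk hγ1)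

end Matrix

theorem dotProduct_lt_apply_of_mem_stdSimplex {ι : Type*} [Fintype ι] [DecidableEq ι]
    {p v : ι → ℝ} {k : ι} (hp : p ∈ stdSimplex ℝ ι) (hpk : p ≠ Pi.single k 1)
    (hv : ∀ i ≠ k, v i < v k) : p ⬝ᵥ v < v k := by
  obtain ⟨i, hik, hpi⟩ : ∃ i ≠ k, 0 < p i := by
    by_contra! h
    have hzero : ∀ i ≠ k, p i = 0 := fun i hi => (h i hi).antisymm (hp.1 i)
    refine hpk (funext fun j => ?_)
    rcases eq_or_ne j k with rfl | hj
    · rw [Pi.single_eq_same, ← hp.2, Finset.sum_eq_single j (fun i _ => hzero i) (by simp)]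
    · rw [Pi.single_eq_of_ne hj, hzero j hj]
  have hle : ∀ j, v j ≤ v k := fun j => by
    rcases eq_or_ne j k with rfl | hj
    exacts [le_rfl, (hv j hj).le]
  calc p ⬝ᵥ v < ∑ j, p j * v k :=
        Finset.sum_lt_sum (fun j _ => mul_le_mul_of_nonneg_left (hle j) (hp.1 j))
          ⟨i, Finset.mem_univ i, mul_lt_mul_of_pos_left (hv i hik) hpi⟩
    _ = v k := by rw [← Finset.sum_mul, hp.2, one_mul]

theorem stmt_0_general (n : ℕ) (P : Matrix (Fin n) (Fin n) ℝ)
    (hPnn : ∀ i j, 0 ≤ P i j) (hProw : ∀ i, ∑ j, P i j ≤ 1)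
    (γ : ℝ) (hγ0 : 0 ≤ γ) (hγ1 : γ < 1) (k : Fin n)
    (e : Fin n → ℝ) (he : e = fun j => if j = k then (1 : ℝ) else 0)
    (p : Fin n → ℝ) (hpnn : ∀ i, 0 ≤ p i) (hpsum : ∑ i, p i = 1)
    (hpe : p ≠ e) :
    ∑' t : ℕ, γ ^ t * (p ⬝ᵥ ((P ^ t) *ᵥ e)) <
      ∑' t : ℕ, γ ^ t * (e ⬝ᵥ ((P ^ t) *ᵥ e)) := by
  obtain rfl : e = Pi.single k 1 := he.trans (funext fun j => (Pi.single_apply k 1 j).symm)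
  have he_mem : (Pi.single k 1 : Fin n → ℝ) ∈ Set.Icc 0 1 := by
    refine ⟨Pi.single_nonneg.2 zero_le_one, fun j => ?_⟩
    rw [Pi.single_apply]
    split_ifs <;> norm_num
  have hs := summable_pow_mul_pow_mulVec_apply hPnn hProw hγ0 hγ1 he_mem
  rw [← dotProduct_discountedSum hs, ← dotProduct_discountedSum hs, single_dotProduct, one_mul]
  have hk : 0 < discountedSum γ P (Pi.single k 1) k := one_pos.trans_le <| by
    simpa using apply_le_discountedSum hs hγ0 (fun t => (pow_mulVec_mem_Icc hPnn hProw he_mem t).1) k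
  exact dotProduct_lt_apply_of_mem_stdSimplex ⟨hpnn, hpsum⟩ hpe fun i hi =>
    apply_lt_of_eq_add_smul_mulVec hPnn hProw hγ0 hγ1 (discountedSum_eq_add_smul_mulVec hs)
      (fun j hj => Pi.single_eq_of_ne hj 1) hk hi

/-- A sub-stochastic matrix `P`, a discount `γ ∈ [0,1)`, the standard basis vector `e` at
index `k`: then `e` is the unique stochastic vector maximizing
`π ↦ ∑_{t} γ^t (πᵀ Pᵗ e)`. -/
theorem stmt_0 (n : ℕ) (hn : 1 ≤ n) (P : Matrix (Fin n) (Fin n) ℝ)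
    (hPnn : ∀ i j, 0 ≤ P i j) (hProw : ∀ i, ∑ j, P i j ≤ 1)
    (γ : ℝ) (hγ0 : 0 ≤ γ) (hγ1 : γ < 1) (k : Fin n)
    (e : Fin n → ℝ) (he : e = fun j => if j = k then (1 : ℝ) else 0)
    (p : Fin n → ℝ) (hpnn : ∀ i, 0 ≤ p i) (hpsum : ∑ i, p i = 1)
    (hpe : p ≠ e) :
    ∑' t : ℕ, γ ^ t * (p ⬝ᵥ ((P ^ t) *ᵥ e)) <
      ∑' t : ℕ, γ ^ t * (e ⬝ᵥ ((P ^ t) *ᵥ e)) :=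
  stmt_0_general n P hPnn hProw γ hγ0 hγ1 k e he p hpnn hpsum hpe
end

section
/- Let n ≥ 1, let P be an n×n real sub-stochastic matrix, let γ ∈ [0,1), let k ∈ {1,…,n}, and let e ∈ ℝⁿ be the standard basis vector with e_k = 1. If h ∈ ℝⁿ satisfies h = e + γ P h, then h_k > h_j for every j ≠ k; in particular the maximum entry of h is attained only at index k. -/
open Matrix

/-! A minimum principle first shows `h ≥ 0`; a row of a sub-stochastic matrix then averages `h`
below its maximum `M`, so `h j = γ (P h) j ≤ γ M < M` off `k`, while `h k ≥ 1 > 0`. Hence the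
maximum sits at `k` and every other entry is at most `γ h k < h k`. -/

namespace Matrix

variable {ι : Type*} [Fintype ι]

theorem mulVec_apply_le_of_forall_le {P : Matrix ι ι ℝ} {i : ι} (hP : ∀ j, 0 ≤ P i j)
    (hProw : ∑ j, P i j ≤ 1) {h : ι → ℝ} {M : ℝ} (hM : 0 ≤ M) (hhM : ∀ j, h j ≤ M) :
    (P *ᵥ h) i ≤ M :=
  calc (P *ᵥ h) i = ∑ j, P i j * h j := rfl
    _ ≤ ∑ j, P i j * M := Finset.sum_le_sum fun j _ => mul_le_mul_of_nonneg_left (hhM j) (hP j)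
    _ = (∑ j, P i j) * M := (Finset.sum_mul ..).symm
    _ ≤ M := mul_le_of_le_one_left hM hProw

theorem le_mulVec_apply_of_forall_le {P : Matrix ι ι ℝ} {i : ι} (hP : ∀ j, 0 ≤ P i j)
    (hProw : ∑ j, P i j ≤ 1) {h : ι → ℝ} {m : ℝ} (hm : m ≤ 0) (hmh : ∀ j, m ≤ h j) :
    m ≤ (P *ᵥ h) i := by
  have := mulVec_apply_le_of_forall_le (h := -h) hP hProw (neg_nonneg.2 hm) fun j =>
    neg_le_neg (hmh j)
  rw [mulVec_neg, Pi.neg_apply] at this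
  linarith

theorem nonneg_of_eq_add_smul_mulVec {P : Matrix ι ι ℝ} (hP : ∀ i j, 0 ≤ P i j)
    (hProw : ∀ i, ∑ j, P i j ≤ 1) {γ : ℝ} (hγ0 : 0 ≤ γ) (hγ1 : γ < 1) {e h : ι → ℝ}
    (he : 0 ≤ e) (hh : h = e + γ • (P *ᵥ h)) : 0 ≤ h := by
  intro i
  have : Nonempty ι := ⟨i⟩
  obtain ⟨i₀, hi₀⟩ := Finite.exists_min h
  suffices 0 ≤ h i₀ from this.trans (hi₀ i)
  by_contra! hneg
  have hPh : h i₀ ≤ (P *ᵥ h) i₀ := le_mulVec_apply_of_forall_le (hP i₀) (hProw i₀) hneg.le hi₀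
  have hfix : h i₀ = e i₀ + γ * (P *ᵥ h) i₀ := congrFun hh i₀
  have he₀ : 0 ≤ e i₀ := he i₀
  nlinarith [mul_nonneg hγ0 (sub_nonneg.2 hPh), mul_pos (sub_pos.2 hγ1) (neg_pos.2 hneg)]

theorem apply_lt_apply_of_eq_single_add_smul_mulVec [DecidableEq ι] {P : Matrix ι ι ℝ}
    (hP : ∀ i j, 0 ≤ P i j) (hProw : ∀ i, ∑ j, P i j ≤ 1) {γ : ℝ} (hγ0 : 0 ≤ γ) (hγ1 : γ < 1)
    {k : ι} {h : ι → ℝ} (hh : h = Pi.single k 1 + γ • (P *ᵥ h)) {j : ι} (hj : j ≠ k) :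
    h j < h k := by
  have hfix (i : ι) : h i = (Pi.single k 1 : ι → ℝ) i + γ * (P *ᵥ h) i := congrFun hh i
  have h_nonneg :=
    nonneg_of_eq_add_smul_mulVec hP hProw hγ0 hγ1 (Pi.single_nonneg.2 zero_le_one) hh
  have : Nonempty ι := ⟨k⟩
  obtain ⟨i₁, hi₁⟩ := Finite.exists_max h
  have hk : 1 ≤ h k := by
    rw [hfix k, Pi.single_eq_same]
    exact le_add_of_nonneg_right <|
      mul_nonneg hγ0 (le_mulVec_apply_of_forall_le (hP k) (hProw k) le_rfl h_nonneg)
  have hoff (i : ι) (hi : i ≠ k) : h i ≤ γ * h i₁ := by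
    rw [hfix i, Pi.single_eq_of_ne hi, zero_add]
    exact mul_le_mul_of_nonneg_left
      (mulVec_apply_le_of_forall_le (hP i) (hProw i) ((h_nonneg k).trans (hi₁ k)) hi₁) hγ0
  have hi₁k : i₁ = k := by
    by_contra hne
    nlinarith [hoff i₁ hne, hi₁ k]
  calc h j ≤ γ * h k := hi₁k ▸ hoff j hj
    _ < h k := mul_lt_of_lt_one_left (by linarith) hγ1

end Matrix

theorem stmt_1_general (n : ℕ) (P : Matrix (Fin n) (Fin n) ℝ)
    (hPnn : ∀ i j, 0 ≤ P i j) (hProw : ∀ i, ∑ j, P i j ≤ 1)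
    (γ : ℝ) (hγ0 : 0 ≤ γ) (hγ1 : γ < 1) (k : Fin n)
    (e : Fin n → ℝ) (he : e = fun j => if j = k then (1 : ℝ) else 0)
    (h : Fin n → ℝ) (hh : h = e + γ • (P *ᵥ h)) :
    ∀ j : Fin n, j ≠ k → h j < h k := by
  have he_single : e = Pi.single k 1 := he.trans (funext fun j => (Pi.single_apply k 1 j).symm)
  subst he_single
  exact fun j hj => apply_lt_apply_of_eq_single_add_smul_mulVec hPnn hProw hγ0 hγ1 hh hj

/-- If `h = e + γ P h` with `P` sub-stochastic, `γ ∈ [0,1)` and `e` the standard basis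
vector at `k`, then `h k > h j` for every `j ≠ k`. -/
theorem stmt_1 (n : ℕ) (hn : 1 ≤ n) (P : Matrix (Fin n) (Fin n) ℝ)
    (hPnn : ∀ i j, 0 ≤ P i j) (hProw : ∀ i, ∑ j, P i j ≤ 1)
    (γ : ℝ) (hγ0 : 0 ≤ γ) (hγ1 : γ < 1) (k : Fin n)
    (e : Fin n → ℝ) (he : e = fun j => if j = k then (1 : ℝ) else 0)
    (h : Fin n → ℝ) (hh : h = e + γ • (P *ᵥ h)) :
    ∀ j : Fin n, j ≠ k → h j < h k :=
  stmt_1_general n P hPnn hProw γ hγ0 hγ1 k e he h hh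
end

section
/- Let n ≥ 1, let P be an n×n real sub-stochastic matrix, let γ ∈ [0,1), let c ∈ ℝⁿ, and let v ∈ ℝⁿ be the unique solution of v = c + γPv. Let k ∈ {1,…,n}, let π ∈ ℝⁿ be a sub-stochastic vector, and let z ∈ ℝ satisfy v_k > z + γ πᵀv. Let P̂ be the matrix obtained from P by replacing its k-th row with πᵀ, let ĉ be the vector obtained from c by replacing its k-th entry with z, and let v̂ ∈ ℝⁿ be the unique solution of v̂ = ĉ + γ P̂ v̂. Then v̂_k < c_k + γ Σ_{j=1}^n P_{kj} v̂_j. -/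
/-!
Put `d = v - v̂`. Subtracting the two fixed-point equations gives
`d = ε eₖ + γ P̂ d` with `ε = v k - (z + γ πᵀ v) > 0`. The discrete minimum principle for
`x ↦ b + γ P̂ x` with `b ≥ 0` gives `d ≥ 0`, and the maximum principle (`b ≤ 0` off `k`) gives that
`d` is maximal at `k`, with `d k ≥ ε > 0`. Hence `γ (P d)ₖ ≤ γ d k < d k`, which is the claim after
substituting `v k = c k + γ (P v)ₖ`.
-/

open Matrix

namespace Matrix

variable {ι : Type*} [Fintype ι]

structure IsSubstochastic (Q : Matrix ι ι ℝ) : Prop where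
  nonneg : ∀ i j, 0 ≤ Q i j
  row_sum_le_one : ∀ i, ∑ j, Q i j ≤ 1

theorem IsSubstochastic.updateRow [DecidableEq ι] {Q : Matrix ι ι ℝ} (hQ : Q.IsSubstochastic)
    (k : ι) {p : ι → ℝ} (hp : ∀ j, 0 ≤ p j) (hps : ∑ j, p j ≤ 1) :
    (Q.updateRow k p).IsSubstochastic where
  nonneg i j := by
    rw [updateRow_apply]
    split_ifs
    exacts [hp j, hQ.nonneg i j]
  row_sum_le_one i := by
    simp only [updateRow_apply]
    split_ifs
    exacts [hps, hQ.row_sum_le_one i]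

theorem dotProduct_le_of_forall_le {q w : ι → ℝ} {M : ℝ} (hq : ∀ i, 0 ≤ q i)
    (hqs : ∑ i, q i ≤ 1) (hM : 0 ≤ M) (hw : ∀ i, w i ≤ M) : q ⬝ᵥ w ≤ M :=
  calc q ⬝ᵥ w ≤ ∑ i, q i * M :=
        Finset.sum_le_sum fun i _ => mul_le_mul_of_nonneg_left (hw i) (hq i)
    _ = (∑ i, q i) * M := Finset.sum_mul _ _ _ |>.symm
    _ ≤ M := mul_le_of_le_one_left hM hqs

theorem le_dotProduct_of_forall_le {q w : ι → ℝ} {m : ℝ} (hq : ∀ i, 0 ≤ q i)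
    (hqs : ∑ i, q i ≤ 1) (hm : m ≤ 0) (hw : ∀ i, m ≤ w i) : m ≤ q ⬝ᵥ w := by
  have := dotProduct_le_of_forall_le (w := -w) hq hqs (neg_nonneg.2 hm) fun i => neg_le_neg (hw i)
  rw [dotProduct_neg] at this
  linarith

section FixedPoint

variable {Q : Matrix ι ι ℝ} {γ : ℝ} {b w : ι → ℝ}

theorem nonneg_of_eq_add_smul_mulVec_s3 (hQ : Q.IsSubstochastic) (hγ0 : 0 ≤ γ) (hγ1 : γ < 1)
    (hb : 0 ≤ b) (hw : w = b + γ • Q *ᵥ w) (i : ι) : 0 ≤ w i := by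
  have : Nonempty ι := ⟨i⟩
  obtain ⟨i₀, hi₀⟩ := Finite.exists_min w
  refine le_trans ?_ (hi₀ i)
  by_contra! hneg
  have hrow : w i₀ ≤ Q i₀ ⬝ᵥ w :=
    le_dotProduct_of_forall_le (hQ.nonneg i₀) (hQ.row_sum_le_one i₀) hneg.le hi₀
  have hi₀eq : w i₀ = b i₀ + γ * (Q i₀ ⬝ᵥ w) := congrFun hw i₀
  have hbi₀ : 0 ≤ b i₀ := hb i₀
  nlinarith [mul_le_mul_of_nonneg_left hrow hγ0]

theorem le_apply_of_eq_add_smul_mulVec (hQ : Q.IsSubstochastic) (hγ0 : 0 ≤ γ) (hγ1 : γ < 1)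
    {k : ι} (hb : ∀ i, i ≠ k → b i ≤ 0) (hk : 0 ≤ w k) (hw : w = b + γ • Q *ᵥ w) (i : ι) :
    w i ≤ w k := by
  have : Nonempty ι := ⟨k⟩
  obtain ⟨i₀, hi₀⟩ := Finite.exists_max w
  refine (hi₀ i).trans ?_
  by_cases hi₀k : i₀ = k
  · rw [hi₀k]
  have hrow : Q i₀ ⬝ᵥ w ≤ w i₀ :=
    dotProduct_le_of_forall_le (hQ.nonneg i₀) (hQ.row_sum_le_one i₀) (hk.trans (hi₀ k)) hi₀
  have hi₀eq : w i₀ = b i₀ + γ * (Q i₀ ⬝ᵥ w) := congrFun hw i₀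
  nlinarith [hb i₀ hi₀k, hi₀ k]

end FixedPoint

theorem sub_eq_single_add_smul_mulVec_updateRow [DecidableEq ι] {P : Matrix ι ι ℝ} {γ : ℝ}
    {c v v' p : ι → ℝ} {k : ι} {z : ℝ} (hv : v = c + γ • P *ᵥ v)
    (hv' : v' = Function.update c k z + γ • P.updateRow k p *ᵥ v') :
    v - v' = Pi.single k (v k - (z + γ * (p ⬝ᵥ v))) + γ • P.updateRow k p *ᵥ (v - v') := by
  funext i
  have hvi : v i = c i + γ * (P i ⬝ᵥ v) := congrFun hv i
  have hv'i : v' i = Function.update c k z i + γ * (P.updateRow k p i ⬝ᵥ v') := congrFun hv' i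
  simp only [Pi.sub_apply, Pi.add_apply, Pi.smul_apply, smul_eq_mul, mulVec, dotProduct_sub]
  by_cases hik : i = k
  · subst hik
    simp only [updateRow_self, Function.update_self, Pi.single_eq_same] at hv'i ⊢
    linarith
  · simp only [updateRow_ne hik, Function.update_of_ne hik, Pi.single_eq_of_ne hik] at hv'i ⊢
    linarith

end Matrix

theorem stmt_3_general (n : ℕ) (P : Matrix (Fin n) (Fin n) ℝ)
    (hPnn : ∀ i j, 0 ≤ P i j) (hProw : ∀ i, ∑ j, P i j ≤ 1)
    (γ : ℝ) (hγ0 : 0 ≤ γ) (hγ1 : γ < 1)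
    (c : Fin n → ℝ) (v : Fin n → ℝ) (hv : v = c + γ • (P *ᵥ v))
    (k : Fin n) (p : Fin n → ℝ) (hpnn : ∀ i, 0 ≤ p i) (hpsum : ∑ i, p i ≤ 1)
    (z : ℝ) (hz : z + γ * ∑ j, p j * v j < v k)
    (Phat : Matrix (Fin n) (Fin n) ℝ)
    (hPhat : ∀ i j, Phat i j = if i = k then p j else P i j)
    (chat : Fin n → ℝ) (hchat : ∀ i, chat i = if i = k then z else c i)
    (vhat : Fin n → ℝ) (hvhat : vhat = chat + γ • (Phat *ᵥ vhat)) :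
    vhat k < c k + γ * ∑ j, P k j * vhat j := by
  obtain rfl : Phat = P.updateRow k p := by ext i j; rw [hPhat, updateRow_apply]
  obtain rfl : chat = Function.update c k z := by funext i; rw [hchat, Function.update_apply]
  have hPsub : P.IsSubstochastic := ⟨hPnn, hProw⟩
  have hPhatSub : (P.updateRow k p).IsSubstochastic := hPsub.updateRow k hpnn hpsum
  have hd := sub_eq_single_add_smul_mulVec_updateRow hv hvhat
  set ε := v k - (z + γ * (p ⬝ᵥ v))
  have hε : 0 < ε := sub_pos.2 hz
  set d := v - vhat
  have hd0 : ∀ i, 0 ≤ d i := nonneg_of_eq_add_smul_mulVec_s3 hPhatSub hγ0 hγ1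
    (Pi.single_nonneg.2 hε.le) hd
  have hdmax : ∀ i, d i ≤ d k := le_apply_of_eq_add_smul_mulVec hPhatSub hγ0 hγ1
    (fun i hik => by simp [hik]) (hd0 k) hd
  have hdk : ε ≤ d k := by
    have hdk : d k = ε + γ * (p ⬝ᵥ d) := by
      conv_lhs => rw [hd]
      simp [mulVec]
    have hpd : 0 ≤ p ⬝ᵥ d := le_dotProduct_of_forall_le hpnn hpsum le_rfl hd0
    linarith [mul_nonneg hγ0 hpd]
  have hPd : P k ⬝ᵥ d ≤ d k := dotProduct_le_of_forall_le (hPnn k) (hProw k) (hd0 k) hdmax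
  have hvk : v k = c k + γ * (P k ⬝ᵥ v) := congrFun hv k
  have hvhatk : vhat k = v k - d k := by simp [d]
  change vhat k < c k + γ * (P k ⬝ᵥ vhat)
  rw [show P k ⬝ᵥ vhat = P k ⬝ᵥ v - P k ⬝ᵥ d by simp [d, dotProduct_sub]]
  nlinarith [mul_le_mul_of_nonneg_left hPd hγ0]

/-- Single-row policy-improvement lemma: if `v = c + γPv`, `v k > z + γ πᵀ v`, and
`v̂` solves the fixed-point equation for the matrix/cost obtained by replacing row `k`
of `P` with `πᵀ` and entry `k` of `c` with `z`, then
`v̂ k < c k + γ ∑ j, P k j * v̂ j`. -/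
theorem stmt_3 (n : ℕ) (hn : 1 ≤ n) (P : Matrix (Fin n) (Fin n) ℝ)
    (hPnn : ∀ i j, 0 ≤ P i j) (hProw : ∀ i, ∑ j, P i j ≤ 1)
    (γ : ℝ) (hγ0 : 0 ≤ γ) (hγ1 : γ < 1)
    (c : Fin n → ℝ) (v : Fin n → ℝ) (hv : v = c + γ • (P *ᵥ v))
    (k : Fin n) (p : Fin n → ℝ) (hpnn : ∀ i, 0 ≤ p i) (hpsum : ∑ i, p i ≤ 1)
    (z : ℝ) (hz : z + γ * ∑ j, p j * v j < v k)
    (Phat : Matrix (Fin n) (Fin n) ℝ)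
    (hPhat : ∀ i j, Phat i j = if i = k then p j else P i j)
    (chat : Fin n → ℝ) (hchat : ∀ i, chat i = if i = k then z else c i)
    (vhat : Fin n → ℝ) (hvhat : vhat = chat + γ • (Phat *ᵥ vhat)) :
    vhat k < c k + γ * ∑ j, P k j * vhat j :=
  stmt_3_general n P hPnn hProw γ hγ0 hγ1 c v hv k p hpnn hpsum z hz Phat hPhat chat hchat vhat
    hvhat
end

section
/- Let n ≥ 1, let P be an n×n real sub-stochastic matrix, let γ ∈ [0,1), let k ∈ {1,…,n}, let e ∈ ℝⁿ be the standard basis vector with e_k = 1, and let π ∈ ℝⁿ be a sub-stochastic vector. Let g ∈ ℝⁿ be the unique solution of (I − γP)ᵀ g = e − γπ. Then g_k > 0. -/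
/-!
Let `v` solve `(I - γP) v = e_k`, i.e. `v` is the `k`-th column of the resolvent. Pairing the
equation for `g` with `v` gives `g_k = v_k - γ ⟪π, v⟫`. A discrete minimum principle shows
`v ≥ 0`, a maximum principle shows that `v` peaks at `k`, where the equation forces `v_k ≥ 1`.
Hence `⟪π, v⟫ ≤ v_k` and `g_k ≥ (1 - γ) v_k > 0`.
-/

open Matrix Finset

section WeightedSum

variable {ι : Type*} [Fintype ι] {w x : ι → ℝ}

lemma sum_mul_le_of_forall_le {M : ℝ} (hw : ∀ j, 0 ≤ w j) (hw1 : ∑ j, w j ≤ 1)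
    (hM : 0 ≤ M) (hx : ∀ j, x j ≤ M) : ∑ j, w j * x j ≤ M :=
  calc ∑ j, w j * x j ≤ ∑ j, w j * M :=
        sum_le_sum fun j _ ↦ mul_le_mul_of_nonneg_left (hx j) (hw j)
    _ = (∑ j, w j) * M := (sum_mul _ _ _).symm
    _ ≤ M := mul_le_of_le_one_left hM hw1

lemma le_sum_mul_of_forall_le {m : ℝ} (hw : ∀ j, 0 ≤ w j) (hw1 : ∑ j, w j ≤ 1)
    (hm : m ≤ 0) (hx : ∀ j, m ≤ x j) : m ≤ ∑ j, w j * x j := by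
  have h := sum_mul_le_of_forall_le (x := -x) hw hw1 (neg_nonneg.2 hm) fun j ↦ neg_le_neg (hx j)
  simp only [Pi.neg_apply, mul_neg, sum_neg_distrib, neg_le_neg_iff] at h
  exact h

end WeightedSum

namespace Matrix

variable {ι : Type*} [Fintype ι] [DecidableEq ι] {P : Matrix ι ι ℝ} {γ : ℝ}

lemma one_sub_smul_mulVec_apply (P : Matrix ι ι ℝ) (γ : ℝ) (x : ι → ℝ) (i : ι) :
    ((1 - γ • P) *ᵥ x) i = x i - γ * ∑ j, P i j * x j := by
  rw [sub_mulVec, one_mulVec, smul_mulVec, Pi.sub_apply, Pi.smul_apply, smul_eq_mul]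
  rfl

lemma eq_zero_of_one_sub_smul_mulVec_eq_zero (hP : ∀ i j, 0 ≤ P i j)
    (hProw : ∀ i, ∑ j, P i j ≤ 1) (hγ0 : 0 ≤ γ) (hγ1 : γ < 1) {x : ι → ℝ}
    (hx : (1 - γ • P) *ᵥ x = 0) : x = 0 := by
  funext j
  have : Nonempty ι := ⟨j⟩
  obtain ⟨i, hi⟩ := Finite.exists_max fun i ↦ |x i|
  have hfix : x i = γ * ∑ j, P i j * x j := by
    have h := congrFun hx i
    rw [one_sub_smul_mulVec_apply] at h
    simpa [sub_eq_zero] using h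
  have hcontract : |x i| ≤ γ * |x i| :=
    calc |x i| = γ * |∑ j, P i j * x j| := by rw [hfix, abs_mul, abs_of_nonneg hγ0]
      _ ≤ γ * ∑ j, P i j * |x j| := by
        gcongr
        refine (abs_sum_le_sum_abs _ _).trans_eq (sum_congr rfl fun j _ ↦ ?_)
        rw [abs_mul, abs_of_nonneg (hP i j)]
      _ ≤ γ * |x i| := by
        gcongr
        exact sum_mul_le_of_forall_le (hP i) (hProw i) (abs_nonneg _) hi
  have hxi : |x i| ≤ 0 := by nlinarith [abs_nonneg (x i)]
  exact abs_nonpos_iff.mp ((hi j).trans hxi)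

lemma isUnit_one_sub_smul (hP : ∀ i j, 0 ≤ P i j) (hProw : ∀ i, ∑ j, P i j ≤ 1)
    (hγ0 : 0 ≤ γ) (hγ1 : γ < 1) : IsUnit (1 - γ • P) := by
  refine mulVec_injective_iff_isUnit.mp fun x y hxy ↦ sub_eq_zero.mp ?_
  exact eq_zero_of_one_sub_smul_mulVec_eq_zero hP hProw hγ0 hγ1
    (by rw [mulVec_sub, hxy, sub_self])

lemma nonneg_of_one_sub_smul_mulVec_nonneg (hP : ∀ i j, 0 ≤ P i j)
    (hProw : ∀ i, ∑ j, P i j ≤ 1) (hγ0 : 0 ≤ γ) (hγ1 : γ < 1) {v : ι → ℝ}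
    (hv : 0 ≤ (1 - γ • P) *ᵥ v) : 0 ≤ v := by
  intro i
  change 0 ≤ v i
  have : Nonempty ι := ⟨i⟩
  obtain ⟨i₀, hi₀⟩ := Finite.exists_min v
  refine le_trans ?_ (hi₀ i)
  by_contra! hneg
  have hsum : v i₀ ≤ ∑ j, P i₀ j * v j :=
    le_sum_mul_of_forall_le (hP i₀) (hProw i₀) hneg.le hi₀
  have h := hv i₀
  rw [Pi.zero_apply, one_sub_smul_mulVec_apply] at h
  nlinarith [mul_le_mul_of_nonneg_left hsum hγ0]

lemma le_apply_of_one_sub_smul_mulVec_nonpos (hP : ∀ i j, 0 ≤ P i j)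
    (hProw : ∀ i, ∑ j, P i j ≤ 1) (hγ0 : 0 ≤ γ) (hγ1 : γ < 1) {v : ι → ℝ} {k : ι}
    (hv0 : 0 ≤ v) (hv : ∀ i ≠ k, ((1 - γ • P) *ᵥ v) i ≤ 0) (j : ι) : v j ≤ v k := by
  have : Nonempty ι := ⟨j⟩
  obtain ⟨i, hi⟩ := Finite.exists_max v
  by_cases hik : i = k
  · exact hik ▸ hi j
  have hsum : ∑ l, P i l * v l ≤ v i := sum_mul_le_of_forall_le (hP i) (hProw i) (hv0 i) hi
  have h := hv i hik
  rw [one_sub_smul_mulVec_apply] at h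
  have hvi : v i ≤ 0 := by nlinarith [mul_le_mul_of_nonneg_left hsum hγ0]
  exact (hi j).trans (hvi.trans (hv0 k))

end Matrix

theorem stmt_4_general (n : ℕ) (P : Matrix (Fin n) (Fin n) ℝ)
    (hPnn : ∀ i j, 0 ≤ P i j) (hProw : ∀ i, ∑ j, P i j ≤ 1)
    (γ : ℝ) (hγ0 : 0 ≤ γ) (hγ1 : γ < 1) (k : Fin n)
    (e : Fin n → ℝ) (he : e = fun j => if j = k then (1 : ℝ) else 0)
    (p : Fin n → ℝ) (hpnn : ∀ i, 0 ≤ p i) (hpsum : ∑ i, p i ≤ 1)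
    (g : Fin n → ℝ) (hg : (1 - γ • P)ᵀ *ᵥ g = e - γ • p) :
    0 < g k := by
  have he : e = Pi.single k 1 := by
    rw [he]; funext j; simp [Pi.single_apply]
  obtain ⟨v, hv⟩ := mulVec_surjective_iff_isUnit.mpr
    (isUnit_one_sub_smul hPnn hProw hγ0 hγ1) (Pi.single k 1)
  have hv0 : 0 ≤ v :=
    nonneg_of_one_sub_smul_mulVec_nonneg hPnn hProw hγ0 hγ1
      (hv ▸ Pi.single_nonneg.2 zero_le_one)
  have hmax : ∀ i, v i ≤ v k := le_apply_of_one_sub_smul_mulVec_nonpos hPnn hProw hγ0 hγ1 hv0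
    fun i hi ↦ by rw [hv, Pi.single_eq_of_ne hi]
  have hvk : 1 ≤ v k := by
    have h := congrFun hv k
    rw [one_sub_smul_mulVec_apply, Pi.single_eq_same] at h
    nlinarith [sum_nonneg fun j (_ : j ∈ univ) ↦ mul_nonneg (hPnn k j) (hv0 j)]
  have hdual : g k = v k - γ * (p ⬝ᵥ v) :=
    calc g k = g ⬝ᵥ ((1 - γ • P) *ᵥ v) := by rw [hv, dotProduct_single, mul_one]
      _ = ((1 - γ • P)ᵀ *ᵥ g) ⬝ᵥ v := by rw [dotProduct_mulVec, mulVec_transpose]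
      _ = v k - γ * (p ⬝ᵥ v) := by
        rw [hg, he, sub_dotProduct, single_dotProduct, one_mul, smul_dotProduct, smul_eq_mul]
  have hpv : p ⬝ᵥ v ≤ v k := sum_mul_le_of_forall_le hpnn hpsum (hv0 k) hmax
  nlinarith [mul_le_mul_of_nonneg_left hpv hγ0]

/-- If `g` solves `(I - γP)ᵀ g = e - γπ` with `P` sub-stochastic, `π` a sub-stochastic
vector, and `e` the standard basis vector at `k`, then `g k > 0`. -/
theorem stmt_4 (n : ℕ) (hn : 1 ≤ n) (P : Matrix (Fin n) (Fin n) ℝ)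
    (hPnn : ∀ i j, 0 ≤ P i j) (hProw : ∀ i, ∑ j, P i j ≤ 1)
    (γ : ℝ) (hγ0 : 0 ≤ γ) (hγ1 : γ < 1) (k : Fin n)
    (e : Fin n → ℝ) (he : e = fun j => if j = k then (1 : ℝ) else 0)
    (p : Fin n → ℝ) (hpnn : ∀ i, 0 ≤ p i) (hpsum : ∑ i, p i ≤ 1)
    (g : Fin n → ℝ) (hg : (1 - γ • P)ᵀ *ᵥ g = e - γ • p) :
    0 < g k :=
  stmt_4_general n P hPnn hProw γ hγ0 hγ1 k e he p hpnn hpsum g hg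
end

section
/- Let S be a finite state set, let γ ∈ [0,1), let G ⊊ S be a proper subset with complement Ḡ = S \ G, and for each i ∈ G let p^{(i)} ∈ ℝ^S be a stochastic vector. Let P_{H,G} be the G×G matrix with entries p^{(i)}_j for i,j ∈ G, and P_{H,Ḡ} the G×Ḡ matrix with entries p^{(i)}_j for i ∈ G, j ∈ Ḡ. Define v̂ ∈ ℝ^S by v̂_j = 1 for j ∈ Ḡ and v̂_G = γ (I − γ P_{H,G})^{-1} P_{H,Ḡ} 𝟏, where 𝟏 ∈ ℝ^Ḡ is the all-ones vector. Then (a) v̂_i = γ Σ_{j∈S} p^{(i)}_j v̂_j for every i ∈ G, and (b) v̂_i ≤ 1 for every i ∈ S. -/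
/-!
On `G` the vector `w = (I - γ P_{H,G})⁻¹ P_{H,Ḡ} 𝟏` solves `w = P_{H,Ḡ} 𝟏 + γ P_{H,G} w`, which is
exactly the Bellman equation (a) for `v̂` once the row sums of `p` are split over `G` and `Ḡ`;
the inverse exists because `I - γ P_{H,G}` is strictly diagonally dominant. For (b), at a maximiser
`i₀` of `v̂` lying in `G` the equation gives `v̂ i₀ ≤ γ v̂ i₀`, so `v̂ i₀ ≤ 0`; otherwise `v̂ i₀ = 1`.
-/

open Matrix

theorem Matrix.det_one_sub_ne_zero_of_sum_row_lt_one {n : Type*} [Fintype n] [DecidableEq n]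
    (Q : Matrix n n ℝ) (hQ : ∀ i j, 0 ≤ Q i j) (hrow : ∀ i, ∑ j, Q i j < 1) :
    (1 - Q).det ≠ 0 := by
  refine det_ne_zero_of_sum_row_lt_diag fun k => ?_
  have hdiag_le : Q k k ≤ ∑ j, Q k j :=
    Finset.single_le_sum (fun j _ => hQ k j) (Finset.mem_univ k)
  have hoff : ∑ j ∈ Finset.univ.erase k, ‖(1 - Q) k j‖ = ∑ j, Q k j - Q k k := by
    rw [← Finset.sum_erase_add _ _ (Finset.mem_univ k), add_sub_cancel_right]
    refine Finset.sum_congr rfl fun j hj => ?_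
    rw [sub_apply, one_apply_ne' (Finset.ne_of_mem_erase hj), zero_sub, norm_neg,
      Real.norm_of_nonneg (hQ k j)]
  have hdiag : ‖(1 - Q) k k‖ = 1 - Q k k := by
    rw [sub_apply, one_apply_eq, Real.norm_of_nonneg (by linarith [hrow k])]
  rw [hoff, hdiag]
  linarith [hrow k]

theorem Matrix.isUnit_det_one_sub_smul_of_substochastic {n : Type*} [Fintype n] [DecidableEq n]
    (P : Matrix n n ℝ) (hP : ∀ i j, 0 ≤ P i j) (hrow : ∀ i, ∑ j, P i j ≤ 1)
    {γ : ℝ} (hγ0 : 0 ≤ γ) (hγ1 : γ < 1) :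
    IsUnit (1 - γ • P).det := by
  refine isUnit_iff_ne_zero.mpr (det_one_sub_ne_zero_of_sum_row_lt_one _ ?_ fun i => ?_)
  · exact fun i j => mul_nonneg hγ0 (hP i j)
  · simp only [smul_apply, smul_eq_mul, ← Finset.mul_sum]
    nlinarith [hrow i]

theorem Matrix.inv_mul_mulVec_eq_mulVec_add {m n : Type*} [Fintype m] [DecidableEq m] [Fintype n]
    (P : Matrix m m ℝ) (B : Matrix m n ℝ) (x : n → ℝ) {γ : ℝ} (h : IsUnit (1 - γ • P).det) :
    ((1 - γ • P)⁻¹ * B) *ᵥ x = B *ᵥ x + γ • P *ᵥ (((1 - γ • P)⁻¹ * B) *ᵥ x) := by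
  set w := ((1 - γ • P)⁻¹ * B) *ᵥ x
  have hw : (1 - γ • P) *ᵥ w = B *ᵥ x := by
    rw [mulVec_mulVec, ← Matrix.mul_assoc, mul_nonsing_inv _ h, Matrix.one_mul]
  rw [← hw, sub_mulVec, one_mulVec, smul_mulVec, sub_add_cancel]

theorem sum_row_le_one_of_stochastic {S : Type*} [Fintype S] (G : Finset S) (p : S → S → ℝ)
    (hpnn : ∀ i ∈ G, ∀ j, 0 ≤ p i j) (hpsum : ∀ i ∈ G, ∑ j, p i j = 1) (i : G) : ∑ j : G, p i j ≤ 1 := by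
  rw [Finset.sum_coe_sort G (p i), ← hpsum i i.2]
  exact Finset.sum_le_univ_sum_of_nonneg (hpnn i i.2)

theorem sum_mul_eq_mulVec_add_mulVec {S : Type*} [Fintype S] [DecidableEq S] (G : Finset S)
    (p : S → S → ℝ) (PHG : Matrix G G ℝ) (hPHG : ∀ i j : G, PHG i j = p i j)
    (PHB : Matrix G (Gᶜ : Finset S) ℝ) (hPHB : ∀ (i : G) (j : (Gᶜ : Finset S)), PHB i j = p i j)
    (v : S → ℝ) (i : G) :
    ∑ j, p i j * v j = (PHG *ᵥ fun j : G => v j) i + (PHB *ᵥ fun j : (Gᶜ : Finset S) => v j) i := by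
  rw [← Finset.sum_add_sum_compl G, ← Finset.sum_coe_sort G, ← Finset.sum_coe_sort Gᶜ]
  simp only [mulVec, dotProduct, hPHG, hPHB]

theorem le_of_eq_discounted_average {S : Type*} [Fintype S] (G : Finset S) (p : S → S → ℝ)
    {γ c : ℝ} (hγ0 : 0 ≤ γ) (hγ1 : γ < 1) (hc : 0 ≤ c)
    (hpnn : ∀ i ∈ G, ∀ j, 0 ≤ p i j) (hpsum : ∀ i ∈ G, ∑ j, p i j = 1)
    (v : S → ℝ) (hvout : ∀ j ∉ G, v j ≤ c) (hvin : ∀ i ∈ G, v i = γ * ∑ j, p i j * v j)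
    (i : S) : v i ≤ c := by
  have : Nonempty S := ⟨i⟩
  obtain ⟨i₀, hi₀⟩ := Finite.exists_max v
  refine (hi₀ i).trans ?_
  by_cases hG : i₀ ∈ G
  · have havg : ∑ j, p i₀ j * v j ≤ v i₀ :=
      calc ∑ j, p i₀ j * v j ≤ ∑ j, p i₀ j * v i₀ :=
            Finset.sum_le_sum fun j _ => mul_le_mul_of_nonneg_left (hi₀ j) (hpnn i₀ hG j)
        _ = v i₀ := by rw [← Finset.sum_mul, hpsum i₀ hG, one_mul]
    nlinarith [hvin i₀ hG]
  · exact hvout i₀ hG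

theorem stmt_6_general {S : Type*} [Fintype S] [DecidableEq S]
    (γ : ℝ) (hγ0 : 0 ≤ γ) (hγ1 : γ < 1)
    (G : Finset S)
    (p : S → S → ℝ)
    (hpnn : ∀ i ∈ G, ∀ j, 0 ≤ p i j) (hpsum : ∀ i ∈ G, ∑ j, p i j = 1)
    (PHG : Matrix G G ℝ) (hPHG : ∀ i j : G, PHG i j = p i j)
    (PHB : Matrix G (Gᶜ : Finset S) ℝ)
    (hPHB : ∀ (i : G) (j : (Gᶜ : Finset S)), PHB i j = p i j)
    (v : S → ℝ)
    (hvout : ∀ j ∉ G, v j = 1)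
    (hvin : ∀ i : G, v i = (γ • (((1 - γ • PHG)⁻¹ * PHB) *ᵥ fun _ => (1 : ℝ))) i) :
    (∀ i ∈ G, v i = γ * ∑ j, p i j * v j) ∧ (∀ i, v i ≤ 1) := by
  set w : G → ℝ := ((1 - γ • PHG)⁻¹ * PHB) *ᵥ fun _ => (1 : ℝ)
  have hunit : IsUnit (1 - γ • PHG).det :=
    isUnit_det_one_sub_smul_of_substochastic PHG (fun i j => hPHG i j ▸ hpnn i i.2 j)
      (fun i => by simpa only [hPHG] using sum_row_le_one_of_stochastic G p hpnn hpsum i) hγ0 hγ1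
  have hvG : (fun j : G => v j) = γ • w := funext hvin
  have hvB : (fun j : (Gᶜ : Finset S) => v j) = fun _ => 1 :=
    funext fun j => hvout j (Finset.mem_compl.mp j.2)
  have bellman : ∀ i ∈ G, v i = γ * ∑ j, p i j * v j := by
    intro i hi
    rw [sum_mul_eq_mulVec_add_mulVec G p PHG hPHG PHB hPHB v ⟨i, hi⟩, hvG, hvB, mulVec_smul,
      add_comm, ← Pi.add_apply, ← inv_mul_mulVec_eq_mulVec_add PHG PHB _ hunit]
    exact hvin ⟨i, hi⟩
  exact ⟨bellman, le_of_eq_discounted_average G p hγ0 hγ1 zero_le_one hpnn hpsum v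
    (fun j hj => (hvout j hj).le) bellman⟩

/-- Feasibility of the optimal DRP solution: with `v̂ = 1` on `Ḡ` and
`v̂_G = γ (I - γ P_{H,G})⁻¹ P_{H,Ḡ} 𝟏`, we have
(a) `v̂ i = γ ∑ j, p i j * v̂ j` for `i ∈ G`, and (b) `v̂ ≤ 1` everywhere. -/
theorem stmt_6 {S : Type*} [Fintype S] [DecidableEq S]
    (γ : ℝ) (hγ0 : 0 ≤ γ) (hγ1 : γ < 1)
    (G : Finset S) (hG : G ≠ Finset.univ)
    (p : S → S → ℝ)
    (hpnn : ∀ i ∈ G, ∀ j, 0 ≤ p i j) (hpsum : ∀ i ∈ G, ∑ j, p i j = 1)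
    (PHG : Matrix G G ℝ) (hPHG : ∀ i j : G, PHG i j = p i j)
    (PHB : Matrix G (Gᶜ : Finset S) ℝ)
    (hPHB : ∀ (i : G) (j : (Gᶜ : Finset S)), PHB i j = p i j)
    (v : S → ℝ)
    (hvout : ∀ j ∉ G, v j = 1)
    (hvin : ∀ i : G, v i = (γ • (((1 - γ • PHG)⁻¹ * PHB) *ᵥ fun _ => (1 : ℝ))) i) :
    (∀ i ∈ G, v i = γ * ∑ j, p i j * v j) ∧ (∀ i, v i ≤ 1) :=
  stmt_6_general γ hγ0 hγ1 G p hpnn hpsum PHG hPHG PHB hPHB v hvout hvin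
end

section
/- Let S be a finite state set, let γ ∈ [0,1), let G ⊊ S be a proper subset with complement Ḡ = S \ G, and for each i ∈ G let p^{(i)} ∈ ℝ^S be a stochastic vector. Let P_{H,G} and P_{H,Ḡ} be the corresponding G×G and G×Ḡ submatrices, and set v̂_G = γ (I − γ P_{H,G})^{-1} P_{H,Ḡ} 𝟏. If ŵ ∈ ℝ^S satisfies ŵ_j ≤ 1 for every j ∈ Ḡ and ŵ_i ≤ γ Σ_{j∈S} p^{(i)}_j ŵ_j for every i ∈ G, then ŵ_i ≤ (v̂_G)_i for every i ∈ G. -/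
open Matrix

/-! Set `M = γ P_{H,G}`, a nonnegative matrix with row sums `≤ γ < 1`. The hypotheses on `ŵ`
say `(I - M) ŵ_G ≤ γ P_{H,Ḡ} 𝟏 = (I - M) v̂_G`, and `I - M` is inverse-monotone by a discrete
maximum principle: at a coordinate where `y - x` is minimal, `((I - M)(y - x))_i ≥ 0` forces
that minimum to be nonnegative. -/

namespace Matrix

variable {n : Type*} [Fintype n] [DecidableEq n] {M : Matrix n n ℝ}

theorem le_of_one_sub_mulVec_le (hM : ∀ i j, 0 ≤ M i j) (hrow : ∀ i, ∑ j, M i j < 1)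
    {x y : n → ℝ} (hxy : (1 - M) *ᵥ x ≤ (1 - M) *ᵥ y) : x ≤ y := by
  set z := y - x
  suffices 0 ≤ z from sub_nonneg.mp this
  by_contra hneg
  obtain ⟨k, hk⟩ : ∃ k, z k < 0 := by simpa [Pi.le_def] using hneg
  have : Nonempty n := ⟨k⟩
  obtain ⟨i, hi⟩ := Finite.exists_min z
  have hzi : z i < 0 := (hi k).trans_lt hk
  have hMz : 0 ≤ z i - ∑ j, M i j * z j := by
    have : 0 ≤ ((1 - M) *ᵥ z) i := by
      rw [mulVec_sub]
      exact sub_nonneg.mpr (hxy i)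
    rwa [sub_mulVec, one_mulVec] at this
  have hmin : (∑ j, M i j) * z i ≤ ∑ j, M i j * z j := by
    rw [Finset.sum_mul]
    exact Finset.sum_le_sum fun j _ => mul_le_mul_of_nonneg_left (hi j) (hM i j)
  nlinarith [hrow i]

theorem isUnit_one_sub_of_sum_lt_one (hM : ∀ i j, 0 ≤ M i j) (hrow : ∀ i, ∑ j, M i j < 1) :
    IsUnit (1 - M) :=
  mulVec_injective_iff_isUnit.mp fun _ _ h =>
    le_antisymm (le_of_one_sub_mulVec_le hM hrow h.le) (le_of_one_sub_mulVec_le hM hrow h.ge)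

end Matrix

theorem Finset.sum_univ_eq_sum_coe_add_sum_coe_compl {ι M : Type*} [Fintype ι] [DecidableEq ι]
    [AddCommMonoid M] (s : Finset ι) (f : ι → M) :
    ∑ i, f i = ∑ i : s, f i + ∑ i : (sᶜ : Finset ι), f i := by
  rw [Finset.sum_coe_sort, Finset.sum_coe_sort, Finset.sum_add_sum_compl]

theorem stmt_7_general {S : Type*} [Fintype S] [DecidableEq S]
    (γ : ℝ) (hγ0 : 0 ≤ γ) (hγ1 : γ < 1)
    (G : Finset S)
    (p : S → S → ℝ)
    (hpnn : ∀ i ∈ G, ∀ j, 0 ≤ p i j) (hpsum : ∀ i ∈ G, ∑ j, p i j = 1)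
    (PHG : Matrix G G ℝ) (hPHG : ∀ i j : G, PHG i j = p i j)
    (PHB : Matrix G (Gᶜ : Finset S) ℝ)
    (hPHB : ∀ (i : G) (j : (Gᶜ : Finset S)), PHB i j = p i j)
    (vG : G → ℝ)
    (hvG : vG = γ • (((1 - γ • PHG)⁻¹ * PHB) *ᵥ fun _ => (1 : ℝ)))
    (w : S → ℝ)
    (hwout : ∀ j ∉ G, w j ≤ 1)
    (hwin : ∀ i ∈ G, w i ≤ γ * ∑ j, p i j * w j) :
    ∀ i : G, w i ≤ vG i := by
  have hM : ∀ i j, 0 ≤ (γ • PHG) i j := fun i j => by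
    simpa [hPHG] using mul_nonneg hγ0 (hpnn i i.2 j)
  have hrow : ∀ i, ∑ j, (γ • PHG) i j < 1 := fun i => by
    have hG : ∑ j : G, p i j ≤ 1 := by
      rw [Finset.sum_coe_sort, ← hpsum i i.2]
      exact Finset.sum_le_univ_sum_of_nonneg (hpnn i i.2)
    simp only [Matrix.smul_apply, smul_eq_mul, hPHG, ← Finset.mul_sum]
    linarith [mul_le_mul_of_nonneg_left hG hγ0]
  have hv : (1 - γ • PHG) *ᵥ vG = γ • (PHB *ᵥ fun _ => 1) := by
    rw [hvG, mulVec_smul, mulVec_mulVec, ← Matrix.mul_assoc,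
      mul_nonsing_inv _ ((isUnit_iff_isUnit_det _).mp (isUnit_one_sub_of_sum_lt_one hM hrow)),
      Matrix.one_mul]
  have hw : (1 - γ • PHG) *ᵥ (fun i : G => w i) ≤ (1 - γ • PHG) *ᵥ vG := by
    rw [hv, sub_mulVec, one_mulVec, smul_mulVec]
    intro i
    have hout : ∑ j : (Gᶜ : Finset S), p i j * w j ≤ ∑ j : (Gᶜ : Finset S), p i j :=
      Finset.sum_le_sum fun j _ =>
        mul_le_of_le_one_right (hpnn i i.2 j) (hwout j (Finset.mem_compl.mp j.2))
    have hwi := hwin i i.2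
    rw [Finset.sum_univ_eq_sum_coe_add_sum_coe_compl G] at hwi
    simp only [Pi.sub_apply, Pi.smul_apply, smul_eq_mul, mulVec, dotProduct, hPHG, hPHB, mul_one]
    linarith [mul_le_mul_of_nonneg_left hout hγ0]
  exact le_of_one_sub_mulVec_le hM hrow hw

/-- Dominance of the optimal DRP solution on `G`: any `ŵ` with `ŵ ≤ 1` off `G` and
`ŵ i ≤ γ ∑ j, p i j * ŵ j` on `G` satisfies `ŵ_G ≤ γ (I - γ P_{H,G})⁻¹ P_{H,Ḡ} 𝟏`. -/
theorem stmt_7 {S : Type*} [Fintype S] [DecidableEq S]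
    (γ : ℝ) (hγ0 : 0 ≤ γ) (hγ1 : γ < 1)
    (G : Finset S) (hG : G ≠ Finset.univ)
    (p : S → S → ℝ)
    (hpnn : ∀ i ∈ G, ∀ j, 0 ≤ p i j) (hpsum : ∀ i ∈ G, ∑ j, p i j = 1)
    (PHG : Matrix G G ℝ) (hPHG : ∀ i j : G, PHG i j = p i j)
    (PHB : Matrix G (Gᶜ : Finset S) ℝ)
    (hPHB : ∀ (i : G) (j : (Gᶜ : Finset S)), PHB i j = p i j)
    (vG : G → ℝ)
    (hvG : vG = γ • (((1 - γ • PHG)⁻¹ * PHB) *ᵥ fun _ => (1 : ℝ)))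
    (w : S → ℝ)
    (hwout : ∀ j ∉ G, w j ≤ 1)
    (hwin : ∀ i ∈ G, w i ≤ γ * ∑ j, p i j * w j) :
    ∀ i : G, w i ≤ vG i :=
  stmt_7_general γ hγ0 hγ1 G p hpnn hpsum PHG hPHG PHB hPHB vG hvG w hwout hwin
end

section
/- Consider a finite-state, finite-action discounted MDP: a finite state set S, a finite nonempty action set U, for each u ∈ U a stochastic matrix P(u) ∈ ℝ^{S×S} and a cost vector c(u) ∈ ℝ^S, and a discount factor γ ∈ [0,1). Suppose v ∈ ℝ^S satisfies v_i ≤ c_i(u) + γ Σ_{j∈S} P_{ij}(u) v_j for every i ∈ S and u ∈ U, and define v̂ ∈ ℝ^S by v̂_i = min_{u∈U} { c_i(u) + γ Σ_j P_{ij}(u) v_j } − v_i. Then for every pair (i,u) with v̂_i − γ Σ_j P_{ij}(u) v̂_j > 0, one has c_i(u) + γ Σ_j P_{ij}(u) v_j − v_i ≥ v̂_i − γ Σ_j P_{ij}(u) v̂_j; consequently the primal-dual step size θ = min over such pairs of (c_i(u) + γ Σ_j P_{ij}(u) v_j − v_i) / (v̂_i − γ Σ_j P_{ij}(u) v̂_j)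 satisfies θ ≥ 1. -/
/-!
Dual feasibility makes `v̂` nonnegative, so for a nonnegative `P(u)` and `γ ≥ 0` the denominator
`v̂_i - γ (P(u) v̂)_i` is at most `v̂_i`, which in turn is at most the numerator
`c_i(u) + γ (P(u) v)_i - v_i` because `v̂_i + v_i` is the minimum of these quantities over `u`.
-/

open Finset

lemma Finset.one_le_inf'_div {ι : Type*} {s : Finset ι} (hs : s.Nonempty) {f g : ι → ℝ}
    (hg : ∀ i ∈ s, 0 < g i) (hgf : ∀ i ∈ s, g i ≤ f i) :
    1 ≤ s.inf' hs fun i => f i / g i :=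
  le_inf' hs _ fun i hi => (one_le_div₀ (hg i hi)).2 (hgf i hi)

lemma inf'_sub_nonneg {U : Type*} [Fintype U] [Nonempty U] {f : U → ℝ} {a : ℝ} (h : ∀ u, a ≤ f u) :
    0 ≤ univ.inf' univ_nonempty f - a :=
  sub_nonneg.2 (le_inf' _ _ fun u _ => h u)

lemma sub_mul_sum_le_self {S : Type*} [Fintype S] {γ : ℝ} (hγ : 0 ≤ γ) {p x : S → ℝ}
    (hp : ∀ j, 0 ≤ p j) (hx : ∀ j, 0 ≤ x j) (a : ℝ) :
    a - γ * ∑ j, p j * x j ≤ a :=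
  sub_le_self _ (mul_nonneg hγ (sum_nonneg fun j _ => mul_nonneg (hp j) (hx j)))

theorem stmt_14_general {S U : Type*} [Fintype S] [Fintype U] [Nonempty U]
    (γ : ℝ) (hγ0 : 0 ≤ γ)
    (P : U → Matrix S S ℝ) (c : U → S → ℝ)
    (hPnn : ∀ u i j, 0 ≤ P u i j)
    (v : S → ℝ)
    (hfeas : ∀ i u, v i ≤ c u i + γ * ∑ j, P u i j * v j)
    (vhat : S → ℝ)
    (hvhat : ∀ i, vhat i =
      (Finset.univ.inf' Finset.univ_nonempty fun u =>
        c u i + γ * ∑ j, P u i j * v j) - v i)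
    (K : Finset (S × U))
    (hKdef : ∀ q : S × U,
      q ∈ K ↔ 0 < vhat q.1 - γ * ∑ j, P q.2 q.1 j * vhat j)
    (hKne : K.Nonempty) :
    (∀ i u, 0 < vhat i - γ * ∑ j, P u i j * vhat j →
        vhat i - γ * ∑ j, P u i j * vhat j ≤ c u i + γ * ∑ j, P u i j * v j - v i) ∧
      1 ≤ K.inf' hKne fun q =>
        (c q.2 q.1 + γ * ∑ j, P q.2 q.1 j * v j - v q.1) /
          (vhat q.1 - γ * ∑ j, P q.2 q.1 j * vhat j) := by
  have hvhat_nonneg : ∀ i, 0 ≤ vhat i := fun i => hvhat i ▸ inf'_sub_nonneg (hfeas i)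
  have hdenom_le_num : ∀ i u, vhat i - γ * ∑ j, P u i j * vhat j ≤
      c u i + γ * ∑ j, P u i j * v j - v i := fun i u =>
    calc vhat i - γ * ∑ j, P u i j * vhat j
        ≤ vhat i := sub_mul_sum_le_self hγ0 (hPnn u i) hvhat_nonneg _
      _ ≤ c u i + γ * ∑ j, P u i j * v j - v i :=
        hvhat i ▸ sub_le_sub_right (inf'_le _ (mem_univ u)) _
  exact ⟨fun i u _ => hdenom_le_num i u,
    one_le_inf'_div hKne (fun q hq => (hKdef q).1 hq) fun q _ => hdenom_le_num q.1 q.2⟩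

/-- With the value-iteration update direction `v̂`, every pair `(i,u)` with positive
denominator `v̂_i - γ ∑_j P_{ij}(u) v̂_j` has numerator
`c_i(u) + γ ∑_j P_{ij}(u) v_j - v_i` at least as large; consequently the primal-dual
step size `θ` is at least `1`. -/
theorem stmt_14 {S U : Type*} [Fintype S] [Fintype U] [Nonempty U]
    (γ : ℝ) (hγ0 : 0 ≤ γ) (hγ1 : γ < 1)
    (P : U → Matrix S S ℝ) (c : U → S → ℝ)
    (hPnn : ∀ u i j, 0 ≤ P u i j) (hProw : ∀ u i, ∑ j, P u i j = 1)
    (v : S → ℝ)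
    (hfeas : ∀ i u, v i ≤ c u i + γ * ∑ j, P u i j * v j)
    (vhat : S → ℝ)
    (hvhat : ∀ i, vhat i =
      (Finset.univ.inf' Finset.univ_nonempty fun u =>
        c u i + γ * ∑ j, P u i j * v j) - v i)
    (K : Finset (S × U))
    (hKdef : ∀ q : S × U,
      q ∈ K ↔ 0 < vhat q.1 - γ * ∑ j, P q.2 q.1 j * vhat j)
    (hKne : K.Nonempty) :
    (∀ i u, 0 < vhat i - γ * ∑ j, P u i j * vhat j →
        vhat i - γ * ∑ j, P u i j * vhat j ≤ c u i + γ * ∑ j, P u i j * v j - v i) ∧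
      1 ≤ K.inf' hKne fun q =>
        (c q.2 q.1 + γ * ∑ j, P q.2 q.1 j * v j - v q.1) /
          (vhat q.1 - γ * ∑ j, P q.2 q.1 j * vhat j) :=
  stmt_14_general γ hγ0 P c hPnn v hfeas vhat hvhat K hKdef hKne
end
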